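/- Let (x_n)_{n∈ℕ} be any real-valued (deterministic) sequence and y ∈ ℝ. Let (ε_n)_{n∈ℕ} and (ε'_n)_{n∈ℕ} be sequences of real random variables with ε_n → 0 in probability and ε'_n → 0 in probability as n → ∞. Then |Φ(x_n(1+ε_n) + y + ε'_n) − Φ(x_n + y)| → 0 in probability. -/

import Mathlib

/-!
Write `a = x + y` and `b = x (1 + u) + y + v`, so `|b - a| ≤ (|x| + 1) η` when `|u|, |v| ≤ η`.
For `η ≤ 1/2` the whole interval between `a` and `b` stays at distance about `|x|/2 - |y|` from
the origin, where the Gaussian density is at most `exp (1 + |y| - |x|/2)`. The factor `|x| + 1`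
is then absorbed by `exp (-|x|/2)`, so `|Φ b - Φ a| ≤ 2 exp (1 + |y|) η` uniformly in `x`.
Hence `|Φ(xₙ(1 + εₙ) + y + ε'ₙ) - Φ(xₙ + y)| ≥ δ` forces `|εₙ| ≥ η` or `|ε'ₙ| ≥ η` for a
suitable `η`, and both events have vanishing probability.
-/

open MeasureTheory Filter

noncomputable section

/-- The standard Gaussian distribution function Φ. -/
def stdGaussianCDF (x : ℝ) : ℝ :=
  ∫ t in Set.Iic x, Real.exp (-t ^ 2 / 2) / Real.sqrt (2 * Real.pi)

open Real Set
open scoped Interval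

lemma integrable_stdGaussianDensity :
    Integrable (fun t : ℝ => exp (-t ^ 2 / 2) / √(2 * π)) := by
  have h := integrable_exp_neg_mul_sq (show (0 : ℝ) < 1 / 2 by norm_num)
  refine (h.congr (ae_of_all _ fun t => ?_)).div_const _
  ring_nf

lemma stdGaussianCDF_sub_eq_intervalIntegral (a b : ℝ) :
    stdGaussianCDF b - stdGaussianCDF a = ∫ t in a..b, exp (-t ^ 2 / 2) / √(2 * π) :=
  intervalIntegral.integral_Iic_sub_Iic integrable_stdGaussianDensity.integrableOn
    integrable_stdGaussianDensity.integrableOn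

lemma abs_stdGaussianCDF_sub_le {a b M : ℝ} (hM : ∀ t ∈ Ι a b, exp (-t ^ 2 / 2) ≤ M) :
    |stdGaussianCDF b - stdGaussianCDF a| ≤ M * |b - a| := by
  rw [stdGaussianCDF_sub_eq_intervalIntegral, ← norm_eq_abs]
  refine intervalIntegral.norm_integral_le_of_norm_le_const fun t ht => ?_
  have hsqrt : 1 ≤ √(2 * π) := one_le_sqrt.mpr (by linarith [pi_gt_three])
  rw [norm_of_nonneg (by positivity)]
  exact (div_le_self (exp_pos _).le hsqrt).trans (hM t ht)

lemma exp_neg_sq_half_le (t : ℝ) : exp (-t ^ 2 / 2) ≤ exp (1 / 2 - |t|) :=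
  exp_le_exp.2 (by nlinarith [sq_abs t, sq_nonneg (|t| - 1)])

lemma add_one_le_two_mul_exp_half (s : ℝ) : s + 1 ≤ 2 * exp (s / 2) := by
  linarith [add_one_le_exp (s / 2)]

lemma abs_stdGaussianCDF_perturb_le {x y u v η : ℝ} (hη : η ≤ 1 / 2) (hu : |u| ≤ η)
    (hv : |v| ≤ η) :
    |stdGaussianCDF (x * (1 + u) + y + v) - stdGaussianCDF (x + y)|
      ≤ 2 * exp (1 + |y|) * η := by
  have hη0 : 0 ≤ η := (abs_nonneg u).trans hu
  have hshift : |x * (1 + u) + y + v - (x + y)| ≤ (|x| + 1) * η := by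
    calc |x * (1 + u) + y + v - (x + y)| = |x * u + v| := by ring_nf
      _ ≤ |x| * |u| + |v| := by rw [← abs_mul]; exact abs_add_le _ _
      _ ≤ (|x| + 1) * η := by nlinarith [abs_nonneg x]
  have hdensity : ∀ t ∈ Ι (x + y) (x * (1 + u) + y + v),
      exp (-t ^ 2 / 2) ≤ exp (1 + |y| - |x| / 2) := by
    intro t ht
    have hta := abs_sub_left_of_mem_uIcc (uIoc_subset_uIcc ht)
    have hxy : |x| ≤ |x + y| + |y| := by simpa using abs_sub (x + y) y
    have ht_far : |x| / 2 - |y| - 1 / 2 ≤ |t| := by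
      nlinarith [abs_sub_abs_le_abs_sub (x + y) t, abs_sub_comm (x + y) t, abs_nonneg x]
    exact (exp_neg_sq_half_le t).trans (exp_le_exp.2 (by linarith))
  calc _ ≤ exp (1 + |y| - |x| / 2) * ((|x| + 1) * η) :=
        (abs_stdGaussianCDF_sub_le hdensity).trans (by gcongr)
    _ = exp (1 + |y|) * ((|x| + 1) * exp (-(|x| / 2))) * η := by
        rw [sub_eq_add_neg, exp_add]; ring
    _ ≤ exp (1 + |y|) * 2 * η := by
        gcongr
        calc (|x| + 1) * exp (-(|x| / 2)) ≤ 2 * exp (|x| / 2) * exp (-(|x| / 2)) := by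
              gcongr; exact add_one_le_two_mul_exp_half _
          _ = 2 := by rw [mul_assoc, ← exp_add]; simp
    _ = 2 * exp (1 + |y|) * η := by ring

lemma tendstoInMeasure_zero_of_forall_small {Ω ι E F G : Type*} [MeasurableSpace Ω]
    {μ : Measure Ω} {l : Filter ι} [SeminormedAddCommGroup E] [SeminormedAddCommGroup F]
    [SeminormedAddCommGroup G] {e : ι → Ω → E} {e' : ι → Ω → F} {Z : ι → Ω → G}
    (he : TendstoInMeasure μ e l 0) (he' : TendstoInMeasure μ e' l 0)
    (hZ : ∀ δ > 0, ∃ η > 0, ∀ i ω, ‖e i ω‖ < η → ‖e' i ω‖ < η → ‖Z i ω‖ < δ) :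
    TendstoInMeasure μ Z l 0 := by
  simp only [tendstoInMeasure_iff_norm, Pi.zero_apply, sub_zero] at he he' ⊢
  intro δ hδ
  obtain ⟨η, hη, hsmall⟩ := hZ δ hδ
  have hsub : ∀ i, {ω | δ ≤ ‖Z i ω‖} ⊆ {ω | η ≤ ‖e i ω‖} ∪ {ω | η ≤ ‖e' i ω‖} := by
    intro i ω hω
    by_contra hc
    simp only [mem_union, mem_ofPred_eq, not_or, not_le] at hω hc
    exact (hsmall i ω hc.1 hc.2).not_ge hω
  refine tendsto_of_tendsto_of_tendsto_of_le_of_le tendsto_const_nhds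
    (by simpa using (he η hη).add (he' η hη)) (fun _ => zero_le) fun i => ?_
  exact (measure_mono (hsub i)).trans (measure_union_le _ _)

theorem gaussianCDF_approximation_general
    {Ω : Type*} [MeasurableSpace Ω] (μ : Measure Ω)
    (x : ℕ → ℝ) (y : ℝ) (e e' : ℕ → Ω → ℝ)
    (he : ∀ δ : ℝ, 0 < δ →
      Tendsto (fun n => μ {ω | δ ≤ |e n ω|}) atTop (nhds 0))
    (he' : ∀ δ : ℝ, 0 < δ →
      Tendsto (fun n => μ {ω | δ ≤ |e' n ω|}) atTop (nhds 0)) :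
    ∀ δ : ℝ, 0 < δ →
      Tendsto
        (fun n => μ {ω |
          δ ≤ |stdGaussianCDF (x n * (1 + e n ω) + y + e' n ω)
                - stdGaussianCDF (x n + y)|})
        atTop (nhds 0) := by
  have inMeasure_iff {f : ℕ → Ω → ℝ} : TendstoInMeasure μ f atTop 0 ↔
      ∀ δ : ℝ, 0 < δ → Tendsto (fun n => μ {ω | δ ≤ |f n ω|}) atTop (nhds 0) := by
    simp [tendstoInMeasure_iff_norm]
  refine inMeasure_iff.1 <| tendstoInMeasure_zero_of_forall_small (inMeasure_iff.2 he)
    (inMeasure_iff.2 he') fun δ hδ => ?_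
  set C := 2 * exp (1 + |y|)
  have hC : 0 < C := by positivity
  refine ⟨min (1 / 2) (δ / (2 * C)), by positivity, fun n ω hu hv => ?_⟩
  simp only [norm_eq_abs] at hu hv ⊢
  calc _ ≤ C * min (1 / 2) (δ / (2 * C)) :=
        abs_stdGaussianCDF_perturb_le (min_le_left _ _) hu.le hv.le
    _ ≤ C * (δ / (2 * C)) := by gcongr; exact min_le_right _ _
    _ < δ := by field_simp; linarith

/-- Gaussian CDF approximation: if `x_n` is a real sequence,
`y ∈ ℝ`, and `ε_n → 0`, `ε'_n → 0` in probability, then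
`|Φ(x_n (1 + ε_n) + y + ε'_n) − Φ(x_n + y)| → 0` in probability. -/
theorem gaussianCDF_approximation
    {Ω : Type*} [MeasurableSpace Ω] (μ : Measure Ω) [IsProbabilityMeasure μ]
    (x : ℕ → ℝ) (y : ℝ) (e e' : ℕ → Ω → ℝ)
    (he : ∀ δ : ℝ, 0 < δ →
      Tendsto (fun n => μ {ω | δ ≤ |e n ω|}) atTop (nhds 0))
    (he' : ∀ δ : ℝ, 0 < δ →
      Tendsto (fun n => μ {ω | δ ≤ |e' n ω|}) atTop (nhds 0)) :
    ∀ δ : ℝ, 0 < δ →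
      Tendsto
        (fun n => μ {ω |
          δ ≤ |stdGaussianCDF (x n * (1 + e n ω) + y + e' n ω)
                - stdGaussianCDF (x n + y)|})
        atTop (nhds 0) :=
  gaussianCDF_approximation_general μ x y e e' he he'

end
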